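/- arXiv:1012.4269 — 3 statements merged into one kernel-verified Lean document; each statement's English description precedes it below -/
import Mathlib

section
/- Let r and s be coprime integers with 2 ≤ r < s, let f be holomorphic on a punctured disc {τ ∈ ℂ : 0 < |τ| < ρ}, and let (a_m)_{m∈ℤ} be the Laurent coefficients of f. Then the following are equivalent: (a) for every function G holomorphic on some open neighborhood of 0 in ℂ² and all sufficiently small ε > 0, ∮_{|τ|=ε} f(τ) G(τ^s, τ^r) τ^{-(r-1)(s-1)} dτ = 0; (b) a_m = 0 for every integer m not belonging to S(r,s) = {αs + βr : α, β ∈ ℕ}. -/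
/-!
For `G = w^α z^β` the moment is, by the Laurent coefficient formula, `2πi a_m` with
`m = (r-1)(s-1) - 1 - αs - βr`; since `S(r,s)` is symmetric about its Frobenius number `rs - r - s`,
these `m` are exactly the integers outside `S(r,s)`. Conversely, by the iterated Cauchy formula on
a bidisc, a function holomorphic near `0 ∈ ℂ²` is a double power series, so `G(τ^s, τ^r)` only
involves powers `τ^n` with `n ∈ S(r,s)`, and in the moment such a power only meets the coefficient
`a_m` with `m = rs - r - s - n ∉ S(r,s)`.
-/

open MeasureTheory Complex Metric Real

theorem hasSum_circleIntegral_of_norm_le {E ι : Type*} [NormedAddCommGroup E] [NormedSpace ℂ E]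
    [Countable ι] {F : ι → ℂ → E} {Φ : ℂ → E} {c : ℂ} {R : ℝ} {b : ι → ℝ} (hR : 0 ≤ R)
    (hF : ∀ i, CircleIntegrable (F i) c R) (hb : ∀ i, ∀ z ∈ sphere c R, ‖F i z‖ ≤ b i)
    (hb_sum : Summable b) (hΦ : ∀ z ∈ sphere c R, HasSum (fun i ↦ F i z) (Φ z)) :
    HasSum (fun i ↦ ∮ z in C(c, R), F i z) (∮ z in C(c, R), Φ z) := by
  refine intervalIntegral.hasSum_integral_of_dominated_convergence (fun i _ ↦ R * b i)
    (fun i ↦ (hF i).out.def'.1) (fun i ↦ ae_of_all _ fun θ _ ↦ ?_)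
    (ae_of_all _ fun _ _ ↦ hb_sum.mul_left R) intervalIntegrable_const
    (ae_of_all _ fun θ _ ↦ (hΦ _ (circleMap_mem_sphere c hR θ)).const_smul _)
  rw [deriv_circleMap, norm_smul, norm_mul, norm_circleMap_zero, norm_I, mul_one, abs_of_nonneg hR]
  exact mul_le_mul_of_nonneg_left (hb i _ (circleMap_mem_sphere c hR θ)) hR

theorem circleIntegral_zpow {R : ℝ} (hR : 0 < R) (n : ℤ) :
    (∮ z in C(0, R), z ^ n) = if n = -1 then 2 * π * I else 0 := by
  split_ifs with hn
  · subst hn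
    simpa using circleIntegral.integral_sub_inv_of_mem_ball (mem_ball_self (x := (0 : ℂ)) hR)
  · simpa using circleIntegral.integral_sub_zpow_of_ne hn 0 0 R

theorem hasSum_circleIntegral_mul_zpow {ι : Type*} [Countable ι] {c : ι → ℂ} {e : ι → ℤ}
    {F : ℂ → ℂ} {R : ℝ} (hR : 0 < R)
    (hF : ∀ τ ∈ sphere (0 : ℂ) R, HasSum (fun i ↦ c i * τ ^ e i) (F τ)) (k : ℤ) :
    HasSum (fun i ↦ if e i + k = -1 then 2 * π * I * c i else 0)
      (∮ τ in C(0, R), F τ * τ ^ k) := by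
  have hRC : ‖(R : ℂ)‖ = R := by simp [hR.le]
  have hsum : Summable fun i ↦ ‖c i * (R : ℂ) ^ e i‖ :=
    summable_norm_iff.2 (hF R (by simp [hR.le])).summable
  have hne : ∀ τ ∈ sphere (0 : ℂ) R, τ ≠ 0 := fun τ hτ ↦ ne_zero_of_mem_sphere hR.ne' ⟨τ, hτ⟩
  have key := hasSum_circleIntegral_of_norm_le (F := fun i τ ↦ c i * τ ^ (e i + k))
    (Φ := fun τ ↦ F τ * τ ^ k) (b := fun i ↦ ‖c i * (R : ℂ) ^ e i‖ * R ^ k) hR.le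
    (fun i ↦ (continuousOn_const.mul (continuousOn_id.zpow₀ _
      fun τ hτ ↦ Or.inl (hne τ hτ))).circleIntegrable hR.le)
    (fun i τ hτ ↦ by
      rw [mem_sphere_zero_iff_norm] at hτ
      rw [norm_mul, norm_mul, norm_zpow, norm_zpow, hτ, hRC, zpow_add₀ hR.ne', mul_assoc])
    (hsum.mul_right _)
    (fun τ hτ ↦ by simpa only [zpow_add₀ (hne τ hτ), mul_assoc] using (hF τ hτ).mul_right (τ ^ k))
  refine key.congr_fun fun i ↦ ?_
  rw [circleIntegral.integral_const_mul, circleIntegral_zpow hR]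
  split_ifs <;> ring

/-- `2πi` times the `n`-th Taylor coefficient at `0` of `f` when `f` is holomorphic on
`closedBall 0 R`. -/
noncomputable def cauchyCoeff (f : ℂ → ℂ) (R : ℝ) (n : ℕ) : ℂ :=
  ∮ z in C(0, R), (z ^ (n + 1))⁻¹ * f z

theorem hasSum_pow_mul_cauchyCoeff {f : ℂ → ℂ} {R : ℝ} {w : ℂ}
    (hf : DifferentiableOn ℂ f (closedBall 0 R)) (hw : ‖w‖ < R) :
    HasSum (fun n ↦ w ^ n * cauchyCoeff f R n) (2 * π * I * f w) := by
  have hR : 0 ≤ R := (norm_nonneg w).trans hw.le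
  have hint := hasSum_two_pi_I_cauchyPowerSeries_integral
    (hf.continuousOn.mono sphere_subset_closedBall |>.circleIntegrable hR) hw
  simp only [sub_zero, zero_add, smul_eq_mul] at hint
  rw [← smul_eq_mul, ← hf.circleIntegral_sub_inv_smul (by simpa using hw)]
  refine hint.congr_fun fun n ↦ ?_
  rw [cauchyCoeff, ← circleIntegral.integral_const_mul]
  congr 1 with z
  rw [div_pow, pow_succ, mul_inv]
  ring

theorem norm_cauchyCoeff_le {f : ℂ → ℂ} {R M : ℝ} (hR : 0 < R)
    (hM : ∀ z ∈ sphere (0 : ℂ) R, ‖f z‖ ≤ M) (n : ℕ) :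
    ‖cauchyCoeff f R n‖ ≤ 2 * π * M / R ^ n := by
  have hbound : ∀ z ∈ sphere (0 : ℂ) R, ‖(z ^ (n + 1))⁻¹ * f z‖ ≤ M / R ^ (n + 1) := by
    intro z hz
    rw [mem_sphere_zero_iff_norm] at hz
    rw [norm_mul, norm_inv, norm_pow, hz, inv_mul_eq_div]
    exact div_le_div_of_nonneg_right (hM z (by simpa using hz)) (by positivity)
  calc ‖cauchyCoeff f R n‖ ≤ 2 * π * R * (M / R ^ (n + 1)) :=
        circleIntegral.norm_integral_le_of_norm_le_const hR.le hbound
    _ = 2 * π * M / R ^ n := by field_simp; ring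

noncomputable def cauchyCoeff₂ (G : ℂ × ℂ → ℂ) (R : ℝ) (p : ℕ × ℕ) : ℂ :=
  cauchyCoeff (fun w ↦ cauchyCoeff (fun z ↦ G (w, z)) R p.2) R p.1

theorem circleIntegrable_cauchyCoeff_slice {G : ℂ × ℂ → ℂ} {R : ℝ} (hR : 0 < R)
    (hG : ContinuousOn G (closedBall 0 R ×ˢ closedBall 0 R)) (n : ℕ) :
    CircleIntegrable (fun w ↦ cauchyCoeff (fun z ↦ G (w, z)) R n) 0 R := by
  refine Continuous.intervalIntegrable ?_ _ _
  simp only [cauchyCoeff, circleIntegral]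
  refine intervalIntegral.continuous_parametric_intervalIntegral_of_continuous'
    (f := fun θ θ' ↦ deriv (circleMap 0 R) θ' •
      ((circleMap 0 R θ' ^ (n + 1))⁻¹ * G (circleMap 0 R θ, circleMap 0 R θ'))) ?_ _ _
  have hmem : ∀ θ, circleMap 0 R θ ∈ closedBall (0 : ℂ) R :=
    fun θ ↦ sphere_subset_closedBall (circleMap_mem_sphere 0 hR.le θ)
  simp only [Function.uncurry_def, deriv_circleMap, smul_eq_mul]
  refine Continuous.mul (by fun_prop) (Continuous.mul ?_ ?_)
  · exact ((continuous_circleMap 0 R).comp continuous_snd).pow _ |>.inv₀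
      fun _ ↦ pow_ne_zero _ (circleMap_ne_center hR.ne')
  · exact hG.comp_continuous (((continuous_circleMap 0 R).comp continuous_fst).prodMk
      ((continuous_circleMap 0 R).comp continuous_snd)) fun θ ↦ ⟨hmem _, hmem _⟩

theorem norm_cauchyCoeff₂_le {G : ℂ × ℂ → ℂ} {R M : ℝ} (hR : 0 < R)
    (hM : ∀ x ∈ closedBall (0 : ℂ) R ×ˢ closedBall (0 : ℂ) R, ‖G x‖ ≤ M) (p : ℕ × ℕ) :
    ‖cauchyCoeff₂ G R p‖ ≤ (2 * π) ^ 2 * M / R ^ (p.1 + p.2) := by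
  have hslice : ∀ w ∈ sphere (0 : ℂ) R,
      ‖cauchyCoeff (fun z ↦ G (w, z)) R p.2‖ ≤ 2 * π * M / R ^ p.2 :=
    fun w hw ↦ norm_cauchyCoeff_le hR
      (fun z hz ↦ hM _ ⟨sphere_subset_closedBall hw, sphere_subset_closedBall hz⟩) p.2
  calc ‖cauchyCoeff₂ G R p‖ ≤ 2 * π * (2 * π * M / R ^ p.2) / R ^ p.1 :=
        norm_cauchyCoeff_le hR hslice p.1
    _ = (2 * π) ^ 2 * M / R ^ (p.1 + p.2) := by rw [pow_add]; field_simp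

theorem hasSum_pow_mul_cauchyCoeff₂_left {G : ℂ × ℂ → ℂ} {R : ℝ} {z : ℂ}
    (hG : DifferentiableOn ℂ G (closedBall 0 R ×ˢ closedBall 0 R)) (hz : ‖z‖ < R) (m : ℕ) :
    HasSum (fun n ↦ z ^ n * cauchyCoeff₂ G R (m, n))
      (2 * π * I * cauchyCoeff (fun w ↦ G (w, z)) R m) := by
  have hR : 0 < R := (norm_nonneg z).trans_lt hz
  obtain ⟨M, hM⟩ := ((isCompact_closedBall (0 : ℂ) R).prod
    (isCompact_closedBall (0 : ℂ) R)).exists_bound_of_continuousOn hG.continuousOn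
  have hslice : ∀ w ∈ sphere (0 : ℂ) R, DifferentiableOn ℂ (fun z' ↦ G (w, z')) (closedBall 0 R) :=
    fun w hw ↦ hG.comp ((differentiableOn_const w).prodMk differentiableOn_id)
      fun z' hz' ↦ ⟨sphere_subset_closedBall hw, hz'⟩
  have hsum := hasSum_circleIntegral_of_norm_le
    (F := fun n w ↦ (w ^ (m + 1))⁻¹ * (z ^ n * cauchyCoeff (fun z' ↦ G (w, z')) R n))
    (Φ := fun w ↦ (w ^ (m + 1))⁻¹ * (2 * π * I * G (w, z)))
    (b := fun n ↦ (R ^ (m + 1))⁻¹ * (2 * π * M) * (‖z‖ / R) ^ n) hR.le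
    (fun n ↦ ((circleIntegrable_cauchyCoeff_slice hR hG.continuousOn n).const_smul
      (a := z ^ n)).continuousOn_mul
      (continuousOn_id.pow _ |>.inv₀ fun w hw ↦ pow_ne_zero _
        (ne_zero_of_mem_sphere (abs_pos.2 hR.ne').ne' ⟨w, hw⟩)))
    (fun n w hw ↦ by
      have hq := norm_cauchyCoeff_le hR
        (fun z' hz' ↦ hM (w, z') ⟨sphere_subset_closedBall hw, sphere_subset_closedBall hz'⟩) n
      rw [mem_sphere_zero_iff_norm] at hw
      rw [norm_mul, norm_mul, norm_inv, norm_pow, norm_pow, hw, div_pow, mul_assoc]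
      refine mul_le_mul_of_nonneg_left ?_ (by positivity)
      calc ‖z‖ ^ n * ‖cauchyCoeff (fun z' ↦ G (w, z')) R n‖ ≤ ‖z‖ ^ n * (2 * π * M / R ^ n) :=
            mul_le_mul_of_nonneg_left hq (by positivity)
        _ = 2 * π * M * (‖z‖ ^ n / R ^ n) := by ring)
    ((summable_geometric_of_lt_one (by positivity) ((div_lt_one hR).2 hz)).mul_left _)
    (fun w hw ↦ by
      simpa only [mul_left_comm _ (z ^ _)] using
        ((hasSum_pow_mul_cauchyCoeff (hslice w hw) hz).mul_left (w ^ (m + 1))⁻¹))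
  have hlim : (∮ w in C(0, R), (w ^ (m + 1))⁻¹ * (2 * π * I * G (w, z)))
      = 2 * π * I * cauchyCoeff (fun w ↦ G (w, z)) R m := by
    rw [cauchyCoeff, ← circleIntegral.integral_const_mul]
    congr 1 with w
    ring
  rw [hlim] at hsum
  refine hsum.congr_fun fun n ↦ ?_
  rw [cauchyCoeff₂, cauchyCoeff, ← circleIntegral.integral_const_mul]
  congr 1 with w
  ring

theorem hasSum_pow_mul_pow_mul_cauchyCoeff₂ {G : ℂ × ℂ → ℂ} {R : ℝ} {w z : ℂ}
    (hG : DifferentiableOn ℂ G (closedBall 0 R ×ˢ closedBall 0 R)) (hw : ‖w‖ < R) (hz : ‖z‖ < R) :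
    HasSum (fun p : ℕ × ℕ ↦ w ^ p.1 * z ^ p.2 * cauchyCoeff₂ G R p)
      ((2 * π * I) ^ 2 * G (w, z)) := by
  have hR : 0 < R := (norm_nonneg w).trans_lt hw
  obtain ⟨M, hM⟩ := ((isCompact_closedBall (0 : ℂ) R).prod
    (isCompact_closedBall (0 : ℂ) R)).exists_bound_of_continuousOn hG.continuousOn
  have hsum : Summable fun p : ℕ × ℕ ↦ w ^ p.1 * z ^ p.2 * cauchyCoeff₂ G R p := by
    have hgeom : ∀ {x : ℂ}, ‖x‖ < R → Summable fun n : ℕ ↦ (‖x‖ / R) ^ n := fun hx ↦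
      summable_geometric_of_lt_one (by positivity) ((div_lt_one hR).2 hx)
    refine Summable.of_norm_bounded (((hgeom hw).mul_of_nonneg (hgeom hz) (fun _ ↦ by positivity)
      (fun _ ↦ by positivity)).mul_left ((2 * π) ^ 2 * M)) fun p ↦ ?_
    calc ‖w ^ p.1 * z ^ p.2 * cauchyCoeff₂ G R p‖
        ≤ ‖w‖ ^ p.1 * ‖z‖ ^ p.2 * ((2 * π) ^ 2 * M / R ^ (p.1 + p.2)) := by
          rw [norm_mul, norm_mul, norm_pow, norm_pow]
          exact mul_le_mul_of_nonneg_left (norm_cauchyCoeff₂_le hR hM p) (by positivity)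
      _ = (2 * π) ^ 2 * M * ((‖w‖ / R) ^ p.1 * (‖z‖ / R) ^ p.2) := by
          rw [div_pow, div_pow, pow_add]; field_simp
  have hslice : DifferentiableOn ℂ (fun w' ↦ G (w', z)) (closedBall 0 R) :=
    hG.comp (differentiableOn_id.prodMk (differentiableOn_const z))
      fun w' hw' ↦ ⟨hw', by simpa using hz.le⟩
  have hfiber (m : ℕ) : HasSum (fun n ↦ w ^ (m, n).1 * z ^ (m, n).2 * cauchyCoeff₂ G R (m, n))
      (2 * π * I * (w ^ m * cauchyCoeff (fun w' ↦ G (w', z)) R m)) := by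
    simpa only [mul_assoc, mul_left_comm (w ^ m)] using
      (hasSum_pow_mul_cauchyCoeff₂_left hG hz m).mul_left (w ^ m)
  rw [sq, mul_assoc]
  convert hsum.hasSum using 1
  exact ((hasSum_pow_mul_cauchyCoeff hslice hw).mul_left _).unique
    (hsum.hasSum.prod_fiberwise hfiber)

def numericalSemigroup (r s : ℕ) : Set ℤ := {m | ∃ α β : ℕ, m = α * s + β * r}

theorem frobenius_notMem_numericalSemigroup {r s : ℕ} (hr : 0 < r)
    (h : r.Coprime s) : (r * s - r - s : ℤ) ∉ numericalSemigroup r s := by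
  rintro ⟨α, β, hαβ⟩
  have hdvd : (r : ℤ) ∣ (α + 1) * s :=
    ⟨s - β - 1, by linear_combination -hαβ⟩
  have hle : (r : ℤ) ≤ α + 1 :=
    Int.le_of_dvd (by positivity) ((Nat.isCoprime_iff_coprime.2 h).dvd_of_dvd_mul_right hdvd)
  nlinarith [mul_le_mul_of_nonneg_right hle (Int.natCast_nonneg s)]

theorem frobenius_sub_mem_numericalSemigroup {r s : ℕ} (hr : 0 < r) (h : r.Coprime s) {m : ℤ}
    (hm : m ∉ numericalSemigroup r s) : r * s - r - s - m ∈ numericalSemigroup r s := by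
  obtain ⟨u, v, huv⟩ := Nat.isCoprime_iff_coprime.2 h
  have hr' : (0 : ℤ) < r := by exact_mod_cast hr
  -- write `m = α s + β r` with `0 ≤ α < r`; then `m ∉ S` forces `β < 0`
  set α := v * m % r
  set β := m * u + v * m / r * s
  have hα₀ : 0 ≤ α := Int.emod_nonneg _ hr'.ne'
  have hαr : α < r := Int.emod_lt_of_pos _ hr'
  have hm_eq : m = α * s + β * r := by
    linear_combination (-m) * huv - s * Int.mul_ediv_add_emod (v * m) r
  have hβ : β < 0 := by
    by_contra! hβ
    exact hm ⟨α.toNat, β.toNat, by simpa [hα₀, hβ] using hm_eq⟩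
  refine ⟨(r - 1 - α).toNat, (-1 - β).toNat, ?_⟩
  rw [Int.toNat_of_nonneg (by omega), Int.toNat_of_nonneg (by omega), hm_eq]
  ring

theorem notMem_numericalSemigroup_iff {r s : ℕ} (hr : 0 < r) (h : r.Coprime s)
    (m : ℤ) : m ∉ numericalSemigroup r s ↔ r * s - r - s - m ∈ numericalSemigroup r s := by
  refine ⟨frobenius_sub_mem_numericalSemigroup hr h, fun ⟨α, β, hαβ⟩ ⟨α', β', hαβ'⟩ ↦ ?_⟩
  exact frobenius_notMem_numericalSemigroup hr h
    ⟨α + α', β + β', by push_cast; linear_combination hαβ + hαβ'⟩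

theorem natCast_sub_one_mul_sub_one {r s : ℕ} (hr : r ≠ 0) (hs : s ≠ 0) :
    (((r - 1) * (s - 1) : ℕ) : ℤ) = r * s - r - s + 1 := by
  push_cast [Nat.one_le_iff_ne_zero.2 hr, Nat.one_le_iff_ne_zero.2 hs]
  ring

theorem exists_hasSum_comp_pow_pow {G : ℂ × ℂ → ℂ} {V : Set (ℂ × ℂ)} (hV : IsOpen V)
    (h0 : (0 : ℂ × ℂ) ∈ V) (hG : DifferentiableOn ℂ G V) {r s : ℕ} (hr : r ≠ 0) (hs : s ≠ 0) :
    ∃ ε₀ > 0, ∃ C : ℕ × ℕ → ℂ, ∀ τ : ℂ, ‖τ‖ < ε₀ →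
      HasSum (fun p : ℕ × ℕ ↦ C p * τ ^ (s * p.1 + r * p.2)) (G (τ ^ s, τ ^ r)) := by
  obtain ⟨δ, hδ, hδV⟩ := nhds_basis_closedBall.mem_iff.1 (hV.mem_nhds h0)
  rw [Prod.zero_eq_mk, ← closedBall_prod_same] at hδV
  refine ⟨min δ 1, by positivity, ((2 * π * I) ^ 2)⁻¹ • cauchyCoeff₂ G δ, fun τ hτ ↦ ?_⟩
  have hpow : ∀ {n : ℕ}, n ≠ 0 → ‖τ ^ n‖ < δ := fun hn ↦ by
    rw [norm_pow]
    exact (pow_le_of_le_one (norm_nonneg τ) (hτ.trans_le (min_le_right _ _)).le hn).trans_lt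
      (hτ.trans_le (min_le_left _ _))
  have h2πI : (2 * π * I : ℂ) ^ 2 ≠ 0 := pow_ne_zero _ two_pi_I_ne_zero
  have := (hasSum_pow_mul_pow_mul_cauchyCoeff₂ (hG.mono hδV) (hpow hs) (hpow hr)).mul_left
    ((2 * π * I) ^ 2)⁻¹
  rw [inv_mul_cancel_left₀ h2πI] at this
  refine this.congr_fun fun p ↦ ?_
  simp only [Pi.smul_apply, smul_eq_mul, pow_add, pow_mul]
  ring

theorem circleIntegral_mul_zpow_eq_of_hasSum {a : ℤ → ℂ} {f : ℂ → ℂ} {R : ℝ} (hR : 0 < R)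
    (ha : ∀ τ ∈ sphere (0 : ℂ) R, HasSum (fun m ↦ a m * τ ^ m) (f τ)) (k : ℤ) :
    (∮ τ in C(0, R), f τ * τ ^ k) = 2 * π * I * a (-k - 1) := by
  refine (hasSum_circleIntegral_mul_zpow (e := id) hR ha k).unique ?_
  convert hasSum_ite_eq (-k - 1) (2 * π * I * a (-k - 1)) using 2 with m
  simp only [id, eq_sub_iff_add_eq, ← eq_neg_add_iff_add_eq]
  split_ifs <;> grind

theorem moment_eq_zero_of_coeff_eq_zero {r s : ℕ} (hr : r ≠ 0) (hs : s ≠ 0)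
    (hcop : r.Coprime s) {a : ℤ → ℂ} {f G : ℂ → ℂ} {C : ℕ × ℕ → ℂ} {ε : ℝ} (hε : 0 < ε)
    (ha : ∀ τ ∈ sphere (0 : ℂ) ε, HasSum (fun m ↦ a m * τ ^ m) (f τ))
    (hvan : ∀ m ∉ numericalSemigroup r s, a m = 0)
    (hC : ∀ τ ∈ sphere (0 : ℂ) ε, HasSum (fun p : ℕ × ℕ ↦ C p * τ ^ (s * p.1 + r * p.2)) (G τ)) :
    (∮ τ in C(0, ε), f τ * G τ * τ ^ (-(((r - 1) * (s - 1) : ℕ) : ℤ))) = 0 := by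
  have hN := natCast_sub_one_mul_sub_one hr hs
  have hprod : ∀ τ ∈ sphere (0 : ℂ) ε, HasSum
      (fun q : ℤ × (ℕ × ℕ) ↦ a q.1 * C q.2 * τ ^ (q.1 + (s * q.2.1 + r * q.2.2 : ℕ)))
      (f τ * G τ) := by
    intro τ hτ
    have hf := ha τ hτ
    have hg := hC τ hτ
    have hτ0 : τ ≠ 0 := ne_zero_of_mem_sphere hε.ne' ⟨τ, hτ⟩
    have hfg : Summable fun q : ℤ × (ℕ × ℕ) ↦
        a q.1 * τ ^ q.1 * (C q.2 * τ ^ (s * q.2.1 + r * q.2.2)) :=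
      summable_mul_of_summable_norm (f := fun m ↦ a m * τ ^ m)
        (g := fun p : ℕ × ℕ ↦ C p * τ ^ (s * p.1 + r * p.2)) (summable_norm_iff.2 hf.summable)
        (summable_norm_iff.2 hg.summable)
    refine (hf.mul hg hfg).congr_fun fun q ↦ ?_
    rw [zpow_add₀ hτ0, zpow_natCast]
    ring
  have key := hasSum_circleIntegral_mul_zpow hε hprod (-(((r - 1) * (s - 1) : ℕ) : ℤ))
  refine key.unique (hasSum_zero.congr_fun fun q ↦ ?_)
  split_ifs with hq
  · have hmem : r * s - r - s - q.1 ∈ numericalSemigroup r s :=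
      ⟨q.2.1, q.2.2, by rw [hN] at hq; push_cast at hq; linear_combination -hq⟩
    rw [hvan q.1 ((notMem_numericalSemigroup_iff (Nat.pos_of_ne_zero hr) hcop q.1).2 hmem),
      zero_mul, mul_zero]
  · rfl

theorem coeff_eq_zero_of_monomial_moment_eq_zero {r s : ℕ} (hr : r ≠ 0) (hs : s ≠ 0)
    {a : ℤ → ℂ} {f : ℂ → ℂ} {ε : ℝ} (hε : 0 < ε)
    (ha : ∀ τ ∈ sphere (0 : ℂ) ε, HasSum (fun m ↦ a m * τ ^ m) (f τ))
    {m : ℤ} {α β : ℕ} (hαβ : r * s - r - s - m = α * s + β * r)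
    (hmom : (∮ τ in C(0, ε), f τ * ((τ ^ s) ^ α * (τ ^ r) ^ β) *
      τ ^ (-(((r - 1) * (s - 1) : ℕ) : ℤ))) = 0) :
    a m = 0 := by
  have hN := natCast_sub_one_mul_sub_one hr hs
  have hcoeff := circleIntegral_mul_zpow_eq_of_hasSum hε ha (-m - 1)
  have hmom' : (∮ τ in C(0, ε), f τ * τ ^ (-m - 1)) = 0 := by
    refine (circleIntegral.integral_congr hε.le fun τ hτ ↦ ?_).trans hmom
    have hτ0 : τ ≠ 0 := ne_zero_of_mem_sphere hε.ne' ⟨τ, hτ⟩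
    rw [← pow_mul, ← pow_mul, ← pow_add, mul_assoc, ← zpow_natCast, ← zpow_add₀ hτ0]
    congr 2
    rw [hN]
    push_cast
    linear_combination hαβ
  simpa [hmom', two_pi_I_ne_zero] using hcoeff

theorem stmt2_general (r s : ℕ) (hr : 2 ≤ r) (hrs : r < s) (hcop : Nat.Coprime r s)
    (ρ : ℝ) (hρ : 0 < ρ) (f : ℂ → ℂ)
    (a : ℤ → ℂ)
    (ha : ∀ τ : ℂ, 0 < ‖τ‖ → ‖τ‖ < ρ →
      HasSum (fun m : ℤ => a m * τ ^ m) (f τ)) :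
    (∀ G : ℂ × ℂ → ℂ,
      (∃ V : Set (ℂ × ℂ), IsOpen V ∧ (0 : ℂ × ℂ) ∈ V ∧ DifferentiableOn ℂ G V) →
      ∃ ε₀ : ℝ, 0 < ε₀ ∧ ∀ ε : ℝ, 0 < ε → ε < ε₀ →
        (∮ τ in C(0, ε), f τ * G (τ ^ s, τ ^ r) * τ ^ (-(((r - 1) * (s - 1) : ℕ) : ℤ)))
          = 0) ↔
    (∀ m : ℤ, ¬ (∃ α β : ℕ, m = (α : ℤ) * (s : ℤ) + (β : ℤ) * (r : ℤ)) → a m = 0) := by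
  have hr₀ : r ≠ 0 := by omega
  have hs₀ : s ≠ 0 := by omega
  have ha' {ε : ℝ} (hε : 0 < ε) (hερ : ε < ρ) :
      ∀ τ ∈ sphere (0 : ℂ) ε, HasSum (fun m ↦ a m * τ ^ m) (f τ) := fun τ hτ ↦ by
    rw [mem_sphere_zero_iff_norm] at hτ
    exact ha τ (hτ ▸ hε) (hτ ▸ hερ)
  constructor
  · intro hmom m hm
    obtain ⟨α, β, hαβ⟩ := (notMem_numericalSemigroup_iff (Nat.pos_of_ne_zero hr₀) hcop m).1 hm
    obtain ⟨ε₀, hε₀, hvan⟩ := hmom (fun p ↦ p.1 ^ α * p.2 ^ β)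
      ⟨Set.univ, isOpen_univ, Set.mem_univ _, by fun_prop⟩
    have hε : 0 < min ε₀ ρ / 2 := by positivity
    exact coeff_eq_zero_of_monomial_moment_eq_zero hr₀ hs₀ hε
      (ha' hε (by linarith [min_le_right ε₀ ρ])) hαβ (hvan _ hε (by linarith [min_le_left ε₀ ρ]))
  · rintro hvan G ⟨V, hV, h0, hG⟩
    obtain ⟨ε₁, hε₁, C, hC⟩ := exists_hasSum_comp_pow_pow hV h0 hG hr₀ hs₀
    refine ⟨min ε₁ ρ, lt_min hε₁ hρ, fun ε hε hεε₀ ↦ ?_⟩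
    exact moment_eq_zero_of_coeff_eq_zero hr₀ hs₀ hcop hε
      (ha' hε (hεε₀.trans_le (min_le_right _ _))) hvan fun τ hτ ↦
        hC τ ((mem_sphere_zero_iff_norm.1 hτ).trans_lt (hεε₀.trans_le (min_le_left _ _)))

/-- For coprime integers `2 ≤ r < s` and `f` holomorphic on a punctured disc
with Laurent coefficients `(a_m)`, the moment condition — for every `G` holomorphic near
`0 ∈ ℂ²`, `∮_{|τ|=ε} f(τ) G(τ^s, τ^r) τ^{-(r-1)(s-1)} dτ = 0` for all sufficiently small
`ε > 0` — holds iff `a_m = 0` for every `m` outside the numerical semigroup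
`S(r,s) = {αs + βr : α, β ∈ ℕ}`. -/
theorem stmt2 (r s : ℕ) (hr : 2 ≤ r) (hrs : r < s) (hcop : Nat.Coprime r s)
    (ρ : ℝ) (hρ : 0 < ρ) (f : ℂ → ℂ)
    (hf : DifferentiableOn ℂ f {τ : ℂ | 0 < ‖τ‖ ∧ ‖τ‖ < ρ})
    (a : ℤ → ℂ)
    (ha : ∀ τ : ℂ, 0 < ‖τ‖ → ‖τ‖ < ρ →
      HasSum (fun m : ℤ => a m * τ ^ m) (f τ)) :
    (∀ G : ℂ × ℂ → ℂ,
      (∃ V : Set (ℂ × ℂ), IsOpen V ∧ (0 : ℂ × ℂ) ∈ V ∧ DifferentiableOn ℂ G V) →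
      ∃ ε₀ : ℝ, 0 < ε₀ ∧ ∀ ε : ℝ, 0 < ε → ε < ε₀ →
        (∮ τ in C(0, ε), f τ * G (τ ^ s, τ ^ r) * τ ^ (-(((r - 1) * (s - 1) : ℕ) : ℤ)))
          = 0) ↔
    (∀ m : ℤ, ¬ (∃ α β : ℕ, m = (α : ℤ) * (s : ℤ) + (β : ℤ) * (r : ℤ)) → a m = 0) :=
  stmt2_general r s hr hrs hcop ρ hρ f a ha
end

section
/- Let n ≥ 1 and 0 ≤ ν ≤ n be integers, let k ∈ ℕ, and fix j ∈ {1, …, n}. For every function ξ : ℂⁿ → ℂ of class C^k with compact support, the integral h(z) = ∫_{ℂⁿ} (conj(ζ_j) − conj(z_j)) · ξ(ζ) · ‖ζ − z‖^{-2ν} dλ(ζ) is absolutely convergent for every z ∈ ℂⁿ, and the function h is of class C^k on ℂⁿ. -/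
/-!
Writing `K(w) = conj(w_j) / ‖w‖^{2ν}`, the integrand is `K(ζ - z) ξ(ζ) = -ξ(ζ) K(z - ζ)`
because `K` is odd, so `h = -(ξ ⋆ K)`. Since `|K(w)| ≤ ‖w‖^{1-2ν}` and `2ν - 1 < 2n = dim_ℝ ℂⁿ`,
the kernel `K` is locally integrable, and the convolution of a locally integrable function with
a compactly supported `C^k` function exists everywhere and is `C^k`.
-/

open MeasureTheory Complex

/-- The Euclidean norm on `ℂⁿ = Fin n → ℂ`. -/
noncomputable def euclNorm {n : ℕ} (w : Fin n → ℂ) : ℝ :=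
  Real.sqrt (∑ i, ‖w i‖ ^ 2)

section EuclNorm

variable {n : ℕ}

@[fun_prop]
lemma continuous_euclNorm : Continuous (euclNorm (n := n)) := by
  unfold euclNorm
  fun_prop

lemma euclNorm_nonneg (w : Fin n → ℂ) : 0 ≤ euclNorm w := Real.sqrt_nonneg _

lemma euclNorm_neg (w : Fin n → ℂ) : euclNorm (-w) = euclNorm w := by
  simp [euclNorm]

lemma norm_apply_le_euclNorm (w : Fin n → ℂ) (i : Fin n) : ‖w i‖ ≤ euclNorm w :=
  Real.le_sqrt_of_sq_le <|
    Finset.single_le_sum (f := fun i => ‖w i‖ ^ 2) (fun _ _ => sq_nonneg _) (Finset.mem_univ i)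

lemma norm_le_euclNorm (w : Fin n → ℂ) : ‖w‖ ≤ euclNorm w :=
  (pi_norm_le_iff_of_nonneg (euclNorm_nonneg w)).mpr (norm_apply_le_euclNorm w)

end EuclNorm

noncomputable def bochnerMartinelliKernel (ν : ℕ) {n : ℕ} (j : Fin n) (w : Fin n → ℂ) : ℂ :=
  starRingEnd ℂ (w j) * ((euclNorm w : ℂ) ^ (2 * ν))⁻¹

namespace bochnerMartinelliKernel

variable {ν n : ℕ} (j : Fin n)

lemma neg_apply (w : Fin n → ℂ) :
    bochnerMartinelliKernel ν j (-w) = -bochnerMartinelliKernel ν j w := by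
  simp [bochnerMartinelliKernel, euclNorm_neg]

lemma measurable : Measurable (bochnerMartinelliKernel ν j) := by
  unfold bochnerMartinelliKernel
  fun_prop

lemma norm_le (w : Fin n → ℂ) : ‖bochnerMartinelliKernel ν j w‖ ≤ ‖w‖ ^ (1 - 2 * ν : ℝ) := by
  rcases eq_or_ne w 0 with rfl | hw
  · simp [bochnerMartinelliKernel]
    positivity
  have hw : 0 < ‖w‖ := norm_pos_iff.mpr hw
  calc ‖bochnerMartinelliKernel ν j w‖ = ‖w j‖ * (euclNorm w ^ (2 * ν))⁻¹ := by
        simp [bochnerMartinelliKernel, abs_of_nonneg (euclNorm_nonneg w)]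
    _ ≤ ‖w‖ * (‖w‖ ^ (2 * ν))⁻¹ := by
        have := euclNorm_nonneg w
        gcongr
        · exact norm_le_pi_norm w j
        · exact norm_le_euclNorm w
    _ = ‖w‖ ^ (1 - 2 * ν : ℝ) := by
        rw [Real.rpow_sub hw, Real.rpow_one, div_eq_mul_inv]
        norm_cast

lemma locallyIntegrable (μ : Measure (Fin n → ℂ)) [μ.IsAddHaarMeasure] (hν : ν ≤ n) :
    LocallyIntegrable (bochnerMartinelliKernel ν j) μ := by
  have hdim : Module.finrank ℝ (Fin n → ℂ) = 2 * n := by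
    simp [Module.finrank_pi_fintype, Complex.finrank_real_complex, mul_comm]
  have hn : 0 < n := j.pos
  refine locallyIntegrable_of_norm_le_rpow (α := 2 * ν - 1) (C := 1) (by omega) ?_
    (ae_of_all _ fun w => ?_) (measurable j).aestronglyMeasurable
  · rw [hdim]
    push_cast
    have : (ν : ℝ) ≤ n := by exact_mod_cast hν
    linarith
  · simpa using norm_le j w

end bochnerMartinelliKernel

theorem stmt3_general (n ν k : ℕ) (hν : ν ≤ n) (j : Fin n)
    (ξ : (Fin n → ℂ) → ℂ)
    (hξ : ContDiff ℝ (k : ℕ∞) ξ) (hsupp : HasCompactSupport ξ) :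
    (∀ z : Fin n → ℂ,
      Integrable (fun ζ : Fin n → ℂ =>
        (starRingEnd ℂ (ζ j) - starRingEnd ℂ (z j)) * ξ ζ *
          ((euclNorm (ζ - z) : ℂ) ^ (2 * ν))⁻¹)) ∧
    ContDiff ℝ (k : ℕ∞) (fun z : Fin n → ℂ =>
      ∫ ζ : Fin n → ℂ,
        (starRingEnd ℂ (ζ j) - starRingEnd ℂ (z j)) * ξ ζ *
          ((euclNorm (ζ - z) : ℂ) ^ (2 * ν))⁻¹) := by
  set K := bochnerMartinelliKernel ν j
  set L := ContinuousLinearMap.mul ℝ ℂ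
  have hintegrand : ∀ z : Fin n → ℂ, (fun ζ =>
      (starRingEnd ℂ (ζ j) - starRingEnd ℂ (z j)) * ξ ζ *
        ((euclNorm (ζ - z) : ℂ) ^ (2 * ν))⁻¹) = fun ζ => -(L (ξ ζ) (K (z - ζ))) := by
    intro z
    ext ζ
    rw [← neg_sub ζ z]
    simp only [K, L, bochnerMartinelliKernel.neg_apply, bochnerMartinelliKernel,
      ContinuousLinearMap.mul_apply', Pi.sub_apply, map_sub]
    ring
  have hK := bochnerMartinelliKernel.locallyIntegrable j volume hν
  refine ⟨fun z => ?_, ?_⟩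
  · rw [hintegrand]
    exact (hsupp.convolutionExists_left L hξ.continuous hK z).neg
  · have hconv : (fun z => ∫ ζ, (starRingEnd ℂ (ζ j) - starRingEnd ℂ (z j)) * ξ ζ *
        ((euclNorm (ζ - z) : ℂ) ^ (2 * ν))⁻¹) = -convolution ξ K L volume := by
      ext z
      rw [hintegrand, integral_neg, Pi.neg_apply, convolution_def]
    rw [hconv]
    exact (hsupp.contDiff_convolution_left L hξ hK).neg

/-- For `ν ≤ n` and `ξ : ℂⁿ → ℂ` of class `C^k` with compact support, the
Bochner–Martinelli-type integral
`h(z) = ∫ (conj ζ_j − conj z_j) ξ(ζ) ‖ζ − z‖^{-2ν} dλ(ζ)`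
(Lebesgue measure, Euclidean norm) is absolutely convergent for every `z` and defines a
`C^k` function of `z`. -/
theorem stmt3 (n ν k : ℕ) (hn : 1 ≤ n) (hν : ν ≤ n) (j : Fin n)
    (ξ : (Fin n → ℂ) → ℂ)
    (hξ : ContDiff ℝ (k : ℕ∞) ξ) (hsupp : HasCompactSupport ξ) :
    (∀ z : Fin n → ℂ,
      Integrable (fun ζ : Fin n → ℂ =>
        (starRingEnd ℂ (ζ j) - starRingEnd ℂ (z j)) * ξ ζ *
          ((euclNorm (ζ - z) : ℂ) ^ (2 * ν))⁻¹)) ∧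
    ContDiff ℝ (k : ℕ∞) (fun z : Fin n → ℂ =>
      ∫ ζ : Fin n → ℂ,
        (starRingEnd ℂ (ζ j) - starRingEnd ℂ (z j)) * ξ ζ *
          ((euclNorm (ζ - z) : ℂ) ^ (2 * ν))⁻¹) :=
  stmt3_general n ν k hν j ξ hξ hsupp
end

section
/- Let r and s be coprime integers with 2 ≤ r < s. Then there exists L ∈ ℕ, depending only on r and s, with the following property: if Φ : ℂ² → ℂ is of class C^{L+1} on an open neighborhood of 0 ∈ ℂ² and the function τ ↦ Φ(τ^s, τ^r) is holomorphic on some punctured disc {0 < |τ| < ρ}, then there exist an open neighborhood U of 0 in ℂ² and a holomorphic function F on U such that F(τ^s, τ^r) = Φ(τ^s, τ^r) for all sufficiently small τ. -/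
open Complex Set Function Metric

/-!
The pullback `g τ = Φ (τ ^ s, τ ^ r)` is continuous at `0` and holomorphic on a punctured disc,
hence holomorphic at `0`, with Taylor series `∑ cₙ τⁿ`. The real derivatives of
`τ ↦ (τ ^ s, τ ^ r)` at `0` vanish except in orders `r` and `s`, so by Faà di Bruno the real
`n`-th derivative of `g` at `0` vanishes unless `n` is a sum of copies of `r` and `s`, i.e. unless
`n` lies in the semigroup `⟨r, s⟩`. Since the Frobenius number of `⟨r, s⟩` is `r s - r - s`, this
only involves derivatives of `Φ` of order `< r s`, and gives `cₙ = 0` for `n ∉ ⟨r, s⟩`. Writing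
each `n ∈ ⟨r, s⟩` uniquely as `a s + b r` with `b < s`, the function
`F ζ = ∑_{b < s} ζ₂ᵇ ∑_a c_{a s + b r} ζ₁ᵃ` is holomorphic near `0` and `F (τ ^ s, τ ^ r) = g τ`.
-/

lemma lt_mul_of_notMem_closure_pair {r s n : ℕ} (hcop : r.Coprime s) (hr : 1 < r) (hs : 1 < s)
    (hn : n ∉ AddSubmonoid.closure ({r, s} : Set ℕ)) : n < r * s :=
  ((frobeniusNumber_pair hcop hr hs).2 hn).trans_lt
    ((Nat.sub_le _ _).trans_lt (Nat.sub_lt (by positivity) (by omega)))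

lemma injective_mul_add_mul_fin {r s : ℕ} (hcop : r.Coprime s) :
    Injective fun p : Fin s × ℕ => p.2 * s + p.1 * r := by
  rintro ⟨b₁, a₁⟩ ⟨b₂, a₂⟩ h
  dsimp only at h
  have hs : 0 < s := b₁.pos
  have hb : (b₁ : ℕ) = b₂ := by
    have hmod : (b₁ : ℕ) * r ≡ b₂ * r [MOD s] := by
      simpa [Nat.ModEq, Nat.add_mul_mod_self_left, add_comm] using congrArg (· % s) h
    simpa [Nat.ModEq, Nat.mod_eq_of_lt b₁.isLt, Nat.mod_eq_of_lt b₂.isLt] using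
      hmod.cancel_right_of_coprime (Nat.coprime_comm.mp hcop)
  have ha : a₁ = a₂ := by
    rw [hb] at h
    exact Nat.eq_of_mul_eq_mul_right hs (by omega)
  simp [Fin.ext hb, ha]

lemma closure_pair_subset_range {r s : ℕ} (hs : 0 < s) :
    (AddSubmonoid.closure ({r, s} : Set ℕ) : Set ℕ) ⊆
      range fun p : Fin s × ℕ => p.2 * s + p.1 * r := by
  intro n hn
  obtain ⟨b, a, rfl⟩ := (AddSubmonoid.mem_closure_pair _ _ _).mp hn
  refine ⟨(⟨b % s, Nat.mod_lt b hs⟩, a + b / s * r), ?_⟩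
  simp only [smul_eq_mul]
  nlinarith [Nat.div_add_mod b s]

lemma OrderedFinpartition.sum_partSize {n : ℕ} (c : OrderedFinpartition n) :
    ∑ i, c.partSize i = n := by
  simpa using c.sum_sigma_eq_sum fun _ => (1 : ℕ)

section FaaDiBruno

variable {𝕜 E F G : Type*} [NontriviallyNormedField 𝕜]
  [NormedAddCommGroup E] [NormedSpace 𝕜 E] [NormedAddCommGroup F] [NormedSpace 𝕜 F]
  [NormedAddCommGroup G] [NormedSpace 𝕜 G]

lemma FormalMultilinearSeries.taylorComp_eq_zero_of_notMem
    (q : FormalMultilinearSeries 𝕜 F G) {p : FormalMultilinearSeries 𝕜 E F} {S : AddSubmonoid ℕ}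
    (hp : ∀ k ∉ S, p k = 0) {n : ℕ} (hn : n ∉ S) : q.taylorComp p n = 0 := by
  refine Finset.sum_eq_zero fun c _ => ?_
  obtain ⟨i, hi⟩ : ∃ i, c.partSize i ∉ S := by
    by_contra! h
    exact hn (c.sum_partSize ▸ AddSubmonoid.sum_mem S fun i _ => h i)
  ext v
  simp only [compAlongOrderedFinpartition_apply, _root_.zero_apply]
  refine (q c.length).map_coord_zero i ?_
  simp [OrderedFinpartition.applyOrderedFinpartition_apply, hp _ hi]

lemma iteratedFDeriv_comp_eq_zero_of_notMem {g : F → G} {f : E → F} {t : Set F} {x : E}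
    {N : ℕ} (hg : ContDiffOn 𝕜 N g t) (ht : IsOpen t) (hf : ContDiff 𝕜 N f) (hx : f x ∈ t)
    {S : AddSubmonoid ℕ} (hfS : ∀ k ∉ S, iteratedFDeriv 𝕜 k f x = 0) {n : ℕ} (hnN : n ≤ N)
    (hnS : n ∉ S) : iteratedFDeriv 𝕜 n (g ∘ f) x = 0 := by
  have hs : IsOpen (f ⁻¹' t) := ht.preimage hf.continuous
  have hcomp := (hg.ftaylorSeriesWithin ht.uniqueDiffOn).comp
    (hf.contDiffOn.ftaylorSeriesWithin hs.uniqueDiffOn) (mapsTo_preimage f t)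
  rw [← iteratedFDerivWithin_of_isOpen n hs hx,
    ← hcomp.eq_iteratedFDerivWithin_of_uniqueDiffOn (by exact_mod_cast hnN) hs.uniqueDiffOn hx]
  refine FormalMultilinearSeries.taylorComp_eq_zero_of_notMem _ (fun k hk => ?_) hnS
  rw [ftaylorSeriesWithin, iteratedFDerivWithin_of_isOpen k hs hx, hfS k hk]

end FaaDiBruno

lemma iteratedFDeriv_pow_eq_zero (𝕜 : Type*) {𝕜' : Type*} [NontriviallyNormedField 𝕜]
    [NontriviallyNormedField 𝕜'] [NormedAlgebra 𝕜 𝕜'] {k m : ℕ} (h : k ≠ m) :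
    iteratedFDeriv 𝕜 k (fun z : 𝕜' => z ^ m) 0 = 0 := by
  have hm : ContDiffAt 𝕜' k (fun z : 𝕜' => z ^ m) 0 := by fun_prop
  rw [← hm.restrictScalars_iteratedFDeriv (𝕜 := 𝕜)]
  ext v
  simp [iteratedFDeriv_apply_eq_iteratedDeriv_mul_prod, iteratedDeriv_fun_pow_zero, h,
    -iteratedDeriv_pow]

lemma iteratedFDeriv_cusp_eq_zero {r s k : ℕ} (hs : k ≠ s) (hr : k ≠ r) :
    iteratedFDeriv ℝ k (fun τ : ℂ => (τ ^ s, τ ^ r)) 0 = 0 := by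
  rw [iteratedFDeriv_prodMk (n := k) (by fun_prop) (by fun_prop) le_rfl,
    iteratedFDeriv_pow_eq_zero ℝ hs, iteratedFDeriv_pow_eq_zero ℝ hr]
  rfl

lemma HasFPowerSeriesOnBall.coeff_eq_zero_of_iteratedFDeriv_real {f : ℂ → ℂ}
    {p : FormalMultilinearSeries ℂ ℂ ℂ} {x : ℂ} {R : ENNReal} (hf : HasFPowerSeriesOnBall f p x R)
    {n : ℕ} (h : iteratedFDeriv ℝ n f x = 0) : p.coeff n = 0 := by
  have hC : iteratedFDeriv ℂ n f x (fun _ => 1) = 0 := by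
    have hR := hf.analyticAt.contDiffAt.restrictScalars_iteratedFDeriv (𝕜 := ℝ) (n := n)
    rw [h] at hR
    exact congrArg (fun L => L fun _ => 1) hR
  have := hf.factorial_smul 1 n
  rw [hC, smul_eq_zero] at this
  simpa [Nat.factorial_ne_zero] using this

lemma differentiableOn_tsum_mul_pow {c : ℕ → ℂ} {R : ℝ} (hc : Summable fun n => ‖c n‖ * R ^ n) :
    DifferentiableOn ℂ (fun z => ∑' n, c n * z ^ n) (ball 0 R) := by
  refine differentiableOn_tsum_of_summable_norm hc (fun n => by fun_prop) isOpen_ball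
    fun n z hz => ?_
  rw [norm_mul, norm_pow]
  gcongr
  exact (mem_ball_zero_iff.mp hz).le

lemma analyticAt_zero_of_differentiableOn_punctured_ball {E : Type*} [NormedAddCommGroup E]
    [NormedSpace ℂ E] [CompleteSpace E] {f : ℂ → E} {ρ : ℝ} (hρ : 0 < ρ)
    (hf : DifferentiableOn ℂ f {τ : ℂ | 0 < ‖τ‖ ∧ ‖τ‖ < ρ}) (hc : ContinuousAt f 0) :
    AnalyticAt ℂ f 0 := by
  have hpunct : {τ : ℂ | 0 < ‖τ‖ ∧ ‖τ‖ < ρ} = ball 0 ρ \ {0} := by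
    ext; simp [norm_pos_iff, and_comm]
  exact ((differentiableOn_compl_singleton_and_continuousAt_iff (ball_mem_nhds 0 hρ)).mp
    ⟨hpunct ▸ hf, hc⟩).analyticAt (ball_mem_nhds 0 hρ)

noncomputable def cuspLift (r s : ℕ) (c : ℕ → ℂ) (ζ : ℂ × ℂ) : ℂ :=
  ∑ b ∈ Finset.range s, ζ.2 ^ b * ∑' a : ℕ, c (a * s + b * r) * ζ.1 ^ a

lemma differentiableOn_cuspLift {r s : ℕ} (hs : 0 < s) {c : ℕ → ℂ} {t : ℝ} (ht : 0 < t)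
    (hc : Summable fun n => ‖c n‖ * t ^ n) :
    DifferentiableOn ℂ (cuspLift r s c) (ball 0 (t ^ s) ×ˢ univ) := by
  refine DifferentiableOn.fun_sum fun b _ => (differentiable_snd.pow b).differentiableOn.mul ?_
  refine (differentiableOn_tsum_mul_pow ?_).comp differentiable_fst.differentiableOn
    fun ζ hζ => hζ.1
  have hinj : Injective fun a : ℕ => a * s + b * r := fun a₁ a₂ h =>
    Nat.eq_of_mul_eq_mul_right hs (by simpa using h)
  refine ((hc.comp_injective hinj).div_const (t ^ (b * r))).congr fun a => ?_
  simp only [comp_apply, pow_add, ← pow_mul, mul_comm s a]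
  field_simp

lemma cuspLift_pow {r s : ℕ} (hs : 0 < s) (hcop : r.Coprime s) {c : ℕ → ℂ} {t : ℝ}
    (hc : Summable fun n => ‖c n‖ * t ^ n)
    (hsupp : ∀ n ∉ AddSubmonoid.closure ({r, s} : Set ℕ), c n = 0) {τ : ℂ} (hτ : ‖τ‖ ≤ t) :
    cuspLift r s c (τ ^ s, τ ^ r) = ∑' n, c n * τ ^ n := by
  set f : ℕ → ℂ := fun n => c n * τ ^ n
  have hf : Summable fun n => ‖f n‖ := by
    refine hc.of_nonneg_of_le (fun n => norm_nonneg _) fun n => ?_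
    rw [norm_mul, norm_pow]
    gcongr
  have hsupp' : support f ⊆ range fun p : Fin s × ℕ => p.2 * s + p.1 * r :=
    fun n hn => closure_pair_subset_range hs
      (not_not.mp fun h => hn (by simp [f, hsupp n h]))
  have hinj := injective_mul_add_mul_fin hcop
  rw [← hinj.tsum_eq hsupp', (hf.comp_injective hinj).of_norm.tsum_prod' fun b =>
    (hf.comp_injective (hinj.comp (Prod.mk_right_injective b))).of_norm, tsum_fintype,
    cuspLift, ← Fin.sum_univ_eq_sum_range]
  refine Finset.sum_congr rfl fun b _ => ?_
  rw [← tsum_mul_left]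
  refine tsum_congr fun a => ?_
  simp only [f, pow_add, ← pow_mul]
  ring

lemma coeff_comp_cusp_eq_zero {r s : ℕ} (hr : 1 < r) (hs : 1 < s)
    (hcop : r.Coprime s) {Φ : ℂ × ℂ → ℂ} {V : Set (ℂ × ℂ)} (hV : IsOpen V) (h0V : 0 ∈ V)
    (hΦ : ContDiffOn ℝ ((r * s : ℕ) : ℕ∞) Φ V) {P : FormalMultilinearSeries ℂ ℂ ℂ}
    {R : ENNReal} (hP : HasFPowerSeriesOnBall (fun τ : ℂ => Φ (τ ^ s, τ ^ r)) P 0 R) {n : ℕ}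
    (hn : n ∉ AddSubmonoid.closure ({r, s} : Set ℕ)) : P.coeff n = 0 := by
  refine hP.coeff_eq_zero_of_iteratedFDeriv_real <|
    iteratedFDeriv_comp_eq_zero_of_notMem hΦ hV (by fun_prop) ?_ (fun k hk => ?_)
      (by exact_mod_cast (lt_mul_of_notMem_closure_pair hcop hr hs hn).le) hn
  · rwa [zero_pow (by omega), zero_pow (by omega)]
  · exact iteratedFDeriv_cusp_eq_zero (fun h => hk (h ▸ AddSubmonoid.subset_closure (by simp)))
      (fun h => hk (h ▸ AddSubmonoid.subset_closure (by simp)))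

/-- For coprime integers `2 ≤ r < s` there is `L ∈ ℕ`, depending only on `r`
and `s`, such that: if `Φ : ℂ² → ℂ` is `C^{L+1}` on a neighborhood of `0` and
`τ ↦ Φ(τ^s, τ^r)` is holomorphic on some punctured disc, then there is a function `F`
holomorphic on a neighborhood `U` of `0 ∈ ℂ²` with `F(τ^s, τ^r) = Φ(τ^s, τ^r)` for all
sufficiently small `τ`. -/
theorem stmt5 (r s : ℕ) (hr : 2 ≤ r) (hrs : r < s) (hcop : Nat.Coprime r s) :
    ∃ L : ℕ, ∀ Φ : ℂ × ℂ → ℂ, ∀ V : Set (ℂ × ℂ),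
      IsOpen V → (0 : ℂ × ℂ) ∈ V → ContDiffOn ℝ ((L + 1 : ℕ) : ℕ∞) Φ V →
      (∃ ρ : ℝ, 0 < ρ ∧ DifferentiableOn ℂ (fun τ : ℂ => Φ (τ ^ s, τ ^ r))
        {τ : ℂ | 0 < ‖τ‖ ∧ ‖τ‖ < ρ}) →
      ∃ U : Set (ℂ × ℂ), IsOpen U ∧ (0 : ℂ × ℂ) ∈ U ∧
        ∃ F : ℂ × ℂ → ℂ, DifferentiableOn ℂ F U ∧
          ∃ δ : ℝ, 0 < δ ∧
            ∀ τ : ℂ, ‖τ‖ < δ → F (τ ^ s, τ ^ r) = Φ (τ ^ s, τ ^ r) := by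
  refine ⟨r * s, fun Φ V hV h0V hΦ ⟨ρ, hρ, hdiff⟩ => ?_⟩
  have hcont : ContinuousAt (fun τ : ℂ => Φ (τ ^ s, τ ^ r)) 0 := by
    refine ContinuousAt.comp (g := Φ) (hΦ.continuousOn.continuousAt (hV.mem_nhds ?_))
      (by fun_prop)
    rwa [zero_pow (by omega), zero_pow (by omega)]
  obtain ⟨P, R, hP⟩ := analyticAt_zero_of_differentiableOn_punctured_ball hρ hdiff hcont
  obtain ⟨t, ht0, htR⟩ := ENNReal.lt_iff_exists_nnreal_btwn.mp hP.r_pos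
  have ht : (0 : ℝ) < t := by exact_mod_cast ht0
  have hsum : Summable fun n => ‖P.coeff n‖ * (t : ℝ) ^ n := by
    simpa using P.summable_norm_mul_pow (htR.trans_le hP.r_le)
  refine ⟨ball 0 (t ^ s) ×ˢ univ, isOpen_ball.prod isOpen_univ,
    ⟨mem_ball_self (pow_pos ht s), mem_univ _⟩, cuspLift r s P.coeff,
    differentiableOn_cuspLift (by omega) ht hsum, t, ht, fun τ hτ => ?_⟩
  rw [cuspLift_pow (by omega) hcop hsum
    (fun n => coeff_comp_cusp_eq_zero (by omega) (by omega) hcop hV h0V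
      (hΦ.of_le (by exact_mod_cast Nat.le_succ _)) hP) hτ.le]
  have hτR : τ ∈ eball 0 R := by
    refine mem_eball_zero_iff.mpr (lt_trans ?_ htR)
    exact_mod_cast hτ
  simpa [mul_comm] using (hP.hasSum hτR).tsum_eq
end
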